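/- In any product L^{a_1,b_1}_{i_1,j_1} ⋯ L^{a_L,b_L}_{i_L,j_L} of q=0 five-vertex L-operator entries with |b| - |i| = |j| - |a| = m - l > 0 (where |x| denotes the number of 1's), the number of factors equal to k is exactly m - l; in particular the product lies in the span of the monomials (a^+)^r, (a^-)^r, (a^+)^s k (a^-)^t, so its trace over the Fock space is finite. -/

import Mathlib

/-- `a^+|m⟩ = |m+1⟩`. -/
noncomputable def aP : Module.End ℚ (ℕ →₀ ℚ) :=
  Finsupp.lsum ℚ fun m => Finsupp.lsingle (m + 1)

/-- `a^-|0⟩ = 0`, `a^-|m⟩ = |m-1⟩` for `m ≥ 1`. -/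
noncomputable def aM : Module.End ℚ (ℕ →₀ ℚ) :=
  Finsupp.lsum ℚ fun m => if m = 0 then 0 else Finsupp.lsingle (m - 1)

/-- `k|0⟩ = |0⟩`, `k|m⟩ = 0` for `m ≥ 1`. -/
noncomputable def kk : Module.End ℚ (ℕ →₀ ℚ) :=
  Finsupp.lsum ℚ fun m => if m = 0 then Finsupp.lsingle 0 else 0

/-- The q=0 3D L-operator `L^{a,b}_{i,j}`: nonzero entries are
`L^{0,0}_{0,0} = L^{1,1}_{1,1} = 1`, `L^{0,1}_{0,1} = k`, `L^{0,1}_{1,0} = a^+`,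
`L^{1,0}_{0,1} = a^-`. -/
noncomputable def Lop : Bool → Bool → Bool → Bool → Module.End ℚ (ℕ →₀ ℚ)
  | false, false, false, false => 1
  | true,  true,  true,  true  => 1
  | false, true,  false, true  => kk
  | false, true,  true,  false => aP
  | true,  false, false, true  => aM
  | _, _, _, _ => 0

/-- number of 1's in a binary string -/
def wt {L : ℕ} (x : Fin L → Bool) : ℕ := (Finset.univ.filter fun r => x r = true).card

/-- The diagonal matrix entry `⟨m|X|m⟩`. -/
noncomputable def diag (X : Module.End ℚ (ℕ →₀ ℚ)) (m : ℕ) : ℚ :=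
  X (Finsupp.single m 1) m

/-!
A vertex with `b_r = 1` either has `i_r = 1` or is the `k`-vertex `(0,1,0,1)`, and never both:
by weight conservation the only other candidate would be the excluded vertex `(1,0,1,0)`.
Hence `|b| = |i| + #k`, so there are `m - l > 0` factors `k`. Using `a^- a^+ = 1`,
`k a^+ = 0`, `a^- k = 0` and `k² = k`, every word in `a^±`, `k` containing a `k` reduces to `0`
or to `(a^+)^s k (a^-)^t`, whose only possibly nonzero diagonal entry is `⟨t|·|t⟩`.
-/

lemma aP_single (n : ℕ) : aP (Finsupp.single n 1) = Finsupp.single (n + 1) 1 := by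
  simp [aP]

lemma aM_single (n : ℕ) :
    aM (Finsupp.single n 1) = if n = 0 then 0 else Finsupp.single (n - 1) 1 := by
  rcases n with _ | n <;> simp [aM]

lemma kk_single (n : ℕ) :
    kk (Finsupp.single n 1) = if n = 0 then Finsupp.single 0 1 else 0 := by
  rcases n with _ | n <;> simp [kk]

lemma aM_mul_aP : aM * aP = 1 := by
  ext n
  simp [aP_single, aM_single]

lemma kk_mul_aP : kk * aP = 0 := by
  ext n
  simp [aP_single, kk_single]

lemma aM_mul_kk : aM * kk = 0 := by
  ext n
  simp [kk_single, aM_single, apply_ite]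

lemma kk_mul_kk : kk * kk = kk := by
  ext n
  simp [kk_single, apply_ite]

lemma aM_mul_aP_pow_succ (s : ℕ) : aM * aP ^ (s + 1) = aP ^ s := by
  rw [pow_succ', ← mul_assoc, aM_mul_aP, one_mul]

lemma kk_mul_aP_pow_succ (s : ℕ) : kk * aP ^ (s + 1) = 0 := by
  rw [pow_succ', ← mul_assoc, kk_mul_aP, zero_mul]

lemma aM_pow_single (t n : ℕ) :
    (aM ^ t) (Finsupp.single n 1) = if t ≤ n then Finsupp.single (n - t) 1 else 0 := by
  induction t generalizing n with
  | zero => simp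
  | succ t ih =>
    rw [pow_succ, Module.End.mul_apply, aM_single]
    rcases n with _ | n
    · simp
    · simp [ih]

lemma diag_aP_pow_mul_kk_mul_aM_pow_of_ne {s t n : ℕ} (hn : n ≠ t) :
    diag (aP ^ s * kk * aM ^ t) n = 0 := by
  rcases le_or_gt t n with hle | hlt
  · simp [diag, aM_pow_single, hle, kk_single, Nat.sub_eq_zero_iff_le,
      not_le.mpr (lt_of_le_of_ne hle hn.symm)]
  · simp [diag, aM_pow_single, not_le.mpr hlt]

def IsLetter (x : Module.End ℚ (ℕ →₀ ℚ)) : Prop :=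
  x = 0 ∨ x = 1 ∨ x = aP ∨ x = aM ∨ x = kk

lemma Lop_isLetter (w x y z : Bool) : IsLetter (Lop w x y z) := by
  cases w <;> cases x <;> cases y <;> cases z <;> simp [IsLetter, Lop]

def IsNormalOrderedWithK (X : Module.End ℚ (ℕ →₀ ℚ)) : Prop :=
  X = 0 ∨ ∃ s t : ℕ, X = aP ^ s * kk * aM ^ t

def IsNormalOrdered (X : Module.End ℚ (ℕ →₀ ℚ)) : Prop :=
  IsNormalOrderedWithK X ∨ ∃ s t : ℕ, X = aP ^ s * aM ^ t

lemma IsNormalOrderedWithK.letter_mul {x X : Module.End ℚ (ℕ →₀ ℚ)} (hx : IsLetter x)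
    (hX : IsNormalOrderedWithK X) : IsNormalOrderedWithK (x * X) := by
  rcases hX with rfl | ⟨s, t, rfl⟩
  · exact .inl (mul_zero x)
  rcases hx with rfl | rfl | rfl | rfl | rfl
  · exact .inl (zero_mul _)
  · exact .inr ⟨s, t, one_mul _⟩
  · exact .inr ⟨s + 1, t, by simp only [← mul_assoc, pow_succ']⟩
  · rcases s with _ | s
    · exact .inl (by rw [pow_zero, one_mul, ← mul_assoc, aM_mul_kk, zero_mul])
    · exact .inr ⟨s, t, by rw [← mul_assoc, ← mul_assoc, aM_mul_aP_pow_succ]⟩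
  · rcases s with _ | s
    · exact .inr ⟨0, t, by simp only [pow_zero, one_mul, ← mul_assoc, kk_mul_kk]⟩
    · exact .inl (by rw [← mul_assoc, ← mul_assoc, kk_mul_aP_pow_succ, zero_mul, zero_mul])

lemma IsNormalOrdered.kk_mul {X : Module.End ℚ (ℕ →₀ ℚ)} (hX : IsNormalOrdered X) :
    IsNormalOrderedWithK (kk * X) := by
  rcases hX with hX | ⟨s, t, rfl⟩
  · exact hX.letter_mul (.inr <| .inr <| .inr <| .inr rfl)
  rcases s with _ | s
  · exact .inr ⟨0, t, by rw [pow_zero, one_mul, one_mul]⟩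
  · exact .inl (by rw [← mul_assoc, kk_mul_aP_pow_succ, zero_mul])

lemma IsNormalOrdered.letter_mul {x X : Module.End ℚ (ℕ →₀ ℚ)} (hx : IsLetter x)
    (hX : IsNormalOrdered X) : IsNormalOrdered (x * X) := by
  rcases hX with hX | ⟨s, t, rfl⟩
  · exact .inl (hX.letter_mul hx)
  rcases hx with rfl | rfl | rfl | rfl | rfl
  · exact .inl (.inl (zero_mul _))
  · exact .inr ⟨s, t, one_mul _⟩
  · exact .inr ⟨s + 1, t, by rw [← mul_assoc, ← pow_succ']⟩
  · rcases s with _ | s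
    · exact .inr ⟨0, t + 1, by rw [pow_zero, one_mul, one_mul, ← pow_succ']⟩
    · exact .inr ⟨s, t, by rw [← mul_assoc, aM_mul_aP_pow_succ]⟩
  · exact .inl (IsNormalOrdered.kk_mul (.inr ⟨s, t, rfl⟩))

lemma isNormalOrdered_prod {ℓ : List (Module.End ℚ (ℕ →₀ ℚ))} (h : ∀ x ∈ ℓ, IsLetter x) :
    IsNormalOrdered ℓ.prod := by
  induction ℓ with
  | nil => exact .inr ⟨0, 0, by simp⟩
  | cons x ℓ ih =>
    rw [List.prod_cons]
    exact (ih fun y hy => h y (List.mem_cons_of_mem x hy)).letter_mul (h x List.mem_cons_self)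

lemma isNormalOrderedWithK_prod {ℓ : List (Module.End ℚ (ℕ →₀ ℚ))} (h : ∀ x ∈ ℓ, IsLetter x)
    (hk : kk ∈ ℓ) : IsNormalOrderedWithK ℓ.prod := by
  obtain ⟨ℓ₁, ℓ₂, rfl⟩ := List.append_of_mem hk
  clear hk
  rw [List.prod_append, List.prod_cons]
  have h₂ : IsNormalOrderedWithK (kk * ℓ₂.prod) :=
    (isNormalOrdered_prod fun x hx => h x (by simp [hx])).kk_mul
  induction ℓ₁ with
  | nil => simpa using h₂
  | cons x ℓ₁ ih =>
    rw [List.prod_cons, mul_assoc]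
    exact (ih fun y hy => h y (by simp_all)).letter_mul (h x List.mem_cons_self)

lemma IsNormalOrderedWithK.mem_span {X : Module.End ℚ (ℕ →₀ ℚ)} (hX : IsNormalOrderedWithK X)
    (S : Set (Module.End ℚ (ℕ →₀ ℚ))) (hS : ∀ s t : ℕ, aP ^ s * kk * aM ^ t ∈ S) :
    X ∈ Submodule.span ℚ S := by
  rcases hX with rfl | ⟨s, t, rfl⟩
  · exact Submodule.zero_mem _
  · exact Submodule.subset_span (hS s t)

lemma IsNormalOrderedWithK.finite_diag_ne_zero {X : Module.End ℚ (ℕ →₀ ℚ)}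
    (hX : IsNormalOrderedWithK X) : {n | diag X n ≠ 0}.Finite := by
  rcases hX with rfl | ⟨s, t, rfl⟩
  · simp [diag]
  · refine (Set.finite_singleton t).subset fun n hn => ?_
    by_contra hne
    exact hn (diag_aP_pow_mul_kk_mul_aM_pow_of_ne hne)

lemma b_eq_true_iff {a b i j : Bool}
    (hcons : (cond a 1 0 : ℕ) + cond b 1 0 = cond i 1 0 + cond j 1 0)
    (hfive : ¬(a = true ∧ b = false ∧ i = true ∧ j = false)) :
    b = true ↔ i = true ∨ (a = false ∧ b = true ∧ i = false ∧ j = true) := by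
  cases a <;> cases b <;> cases i <;> cases j <;> simp_all

lemma wt_eq_wt_add_card {L : ℕ} {a b i j : Fin L → Bool}
    (hcons : ∀ r, (cond (a r) 1 0 : ℕ) + cond (b r) 1 0 = cond (i r) 1 0 + cond (j r) 1 0)
    (hfive : ∀ r, ¬(a r = true ∧ b r = false ∧ i r = true ∧ j r = false)) :
    wt b = wt i +
      (Finset.univ.filter fun r => a r = false ∧ b r = true ∧ i r = false ∧ j r = true).card := by
  unfold wt
  rw [Finset.filter_congr fun r _ => b_eq_true_iff (hcons r) (hfive r), Finset.filter_or,
    Finset.card_union_of_disjoint]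
  exact Finset.disjoint_filter.mpr fun r _ hi hk => by simp [hi] at hk

theorem stmt6_general (L l m : ℕ) (a b i j : Fin L → Bool)
    (hcons : ∀ r, (cond (a r) 1 0 : ℕ) + cond (b r) 1 0 = cond (i r) 1 0 + cond (j r) 1 0)
    (hfive : ∀ r, ¬(a r = true ∧ b r = false ∧ i r = true ∧ j r = false))
    (hi : wt i = l) (hb : wt b = m) (hlm : l < m) :
    (Finset.univ.filter fun r =>
        a r = false ∧ b r = true ∧ i r = false ∧ j r = true).card = m - l ∧
    (List.ofFn fun r => Lop (a r) (b r) (i r) (j r)).prod ∈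
      Submodule.span ℚ
        (({Y | ∃ r ≥ 1, Y = aP ^ r}
          ∪ {Y | ∃ r ≥ 1, Y = aM ^ r}
          ∪ {Y | ∃ s t : ℕ, Y = aP ^ s * kk * aM ^ t})
          : Set (Module.End ℚ (ℕ →₀ ℚ))) ∧
    {n | diag ((List.ofFn fun r => Lop (a r) (b r) (i r) (j r)).prod) n ≠ 0}.Finite := by
  have hcard := wt_eq_wt_add_card hcons hfive
  obtain ⟨r, hr⟩ : (Finset.univ.filter fun r =>
      a r = false ∧ b r = true ∧ i r = false ∧ j r = true).Nonempty := by
    rw [← Finset.card_pos]; omega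
  obtain ⟨-, har, hbr, hir, hjr⟩ := Finset.mem_filter.mp hr
  have hk : kk ∈ List.ofFn fun r => Lop (a r) (b r) (i r) (j r) :=
    List.mem_ofFn.mpr ⟨r, by rw [har, hbr, hir, hjr]; rfl⟩
  have hprod := isNormalOrderedWithK_prod
    (fun x hx => by obtain ⟨r, rfl⟩ := List.mem_ofFn.mp hx; exact Lop_isLetter _ _ _ _) hk
  exact ⟨by omega, hprod.mem_span _ fun s t => .inr ⟨s, t, rfl⟩, hprod.finite_diag_ne_zero⟩

/-- in a product `L^{a_1,b_1}_{i_1,j_1} ⋯ L^{a_L,b_L}_{i_L,j_L}` of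
five-vertex L-operator entries (weight-conserving, no forbidden `(1,0,1,0)` vertex)
with `|i| = |a| = l`, `|j| = |b| = m`, `l < m`, the number of factors equal to `k`
is exactly `m - l`; the product lies in the span of the monomials
`(a^+)^r`, `(a^-)^r`, `(a^+)^s k (a^-)^t`, and its trace is finite
(only finitely many nonzero diagonal entries). -/
theorem stmt6 (L l m : ℕ) (a b i j : Fin L → Bool)
    (hcons : ∀ r, (cond (a r) 1 0 : ℕ) + cond (b r) 1 0 = cond (i r) 1 0 + cond (j r) 1 0)
    (hfive : ∀ r, ¬(a r = true ∧ b r = false ∧ i r = true ∧ j r = false))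
    (ha : wt a = l) (hi : wt i = l) (hb : wt b = m) (hj : wt j = m) (hlm : l < m) :
    (Finset.univ.filter fun r =>
        a r = false ∧ b r = true ∧ i r = false ∧ j r = true).card = m - l ∧
    (List.ofFn fun r => Lop (a r) (b r) (i r) (j r)).prod ∈
      Submodule.span ℚ
        (({Y | ∃ r ≥ 1, Y = aP ^ r}
          ∪ {Y | ∃ r ≥ 1, Y = aM ^ r}
          ∪ {Y | ∃ s t : ℕ, Y = aP ^ s * kk * aM ^ t})
          : Set (Module.End ℚ (ℕ →₀ ℚ))) ∧
    {n | diag ((List.ofFn fun r => Lop (a r) (b r) (i r) (j r)).prod) n ≠ 0}.Finite :=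
  stmt6_general L l m a b i j hcons hfive hi hb hlm
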